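/- arXiv:1201.1280 — 6 statements merged into one kernel-verified Lean document; each statement's English description precedes it below -/
import Mathlib

section
/- Let p be a prime and let δ ∈ GL₂(ℤ_p) be a matrix congruent to the identity modulo p², with lower-left entry c₁ = m₁ pⁿ + m₂ p^{n+1} + u p^{n+2} where m₁ ∈ {1,…,p−1}, m₂ ∈ {0,…,p−1}, u ∈ ℤ_p, and n ≥ 2. Then for every positive integer j, the lower-left entry c_j of δ^j satisfies c_j = j m₁ pⁿ + j m₂ p^{n+1} + u_j p^{n+2} for some u_j ∈ ℤ_p. -/
/-- Let `δ ∈ GL₂(ℤ_p)` be congruent to the identity mod `p²`, with lower-left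
entry `c₁ = m₁ pⁿ + m₂ p^(n+1) + u p^(n+2)` where `1 ≤ m₁ ≤ p-1`, `0 ≤ m₂ ≤ p-1`, `u ∈ ℤ_p`,
`n ≥ 2`.  Then for every positive integer `j`, the lower-left entry of `δ^j` equals
`j m₁ pⁿ + j m₂ p^(n+1) + u_j p^(n+2)` for some `u_j ∈ ℤ_p`. -/
theorem stmt_3 (p : ℕ) [Fact p.Prime] (δ : GL (Fin 2) ℤ_[p])
    (hδ : ∀ i j : Fin 2, ((p : ℤ_[p]) ^ 2) ∣
      (((δ : Matrix (Fin 2) (Fin 2) ℤ_[p]) - 1) i j))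
    (n : ℕ) (hn : 2 ≤ n)
    (m₁ m₂ : ℕ) (hm₁ : 1 ≤ m₁) (hm₁' : m₁ ≤ p - 1) (hm₂ : m₂ ≤ p - 1)
    (u : ℤ_[p])
    (hc : (δ : Matrix (Fin 2) (Fin 2) ℤ_[p]) 1 0
      = (m₁ : ℤ_[p]) * (p : ℤ_[p]) ^ n + (m₂ : ℤ_[p]) * (p : ℤ_[p]) ^ (n + 1)
        + u * (p : ℤ_[p]) ^ (n + 2)) :
    ∀ j : ℕ, 0 < j → ∃ uj : ℤ_[p],
      ((δ ^ j : GL (Fin 2) ℤ_[p]) : Matrix (Fin 2) (Fin 2) ℤ_[p]) 1 0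
        = (j : ℤ_[p]) * (m₁ : ℤ_[p]) * (p : ℤ_[p]) ^ n
          + (j : ℤ_[p]) * (m₂ : ℤ_[p]) * (p : ℤ_[p]) ^ (n + 1)
          + uj * (p : ℤ_[p]) ^ (n + 2) := by
  have hpn : ∃ v : ℤ_[p], (p : ℤ_[p]) ^ n = (p : ℤ_[p]) ^ 2 * v :=
    ⟨(p : ℤ_[p]) ^ (n - 2), by rw [← pow_add]; congr 1; omega⟩
  have key : ∀ j : ℕ,
      (∀ i k : Fin 2, ((p : ℤ_[p]) ^ 2) ∣
        ((((δ ^ j : GL (Fin 2) ℤ_[p]) : Matrix (Fin 2) (Fin 2) ℤ_[p]) - 1) i k)) ∧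
      (0 < j → ∃ uj : ℤ_[p],
        ((δ ^ j : GL (Fin 2) ℤ_[p]) : Matrix (Fin 2) (Fin 2) ℤ_[p]) 1 0
          = (j : ℤ_[p]) * (m₁ : ℤ_[p]) * (p : ℤ_[p]) ^ n
            + (j : ℤ_[p]) * (m₂ : ℤ_[p]) * (p : ℤ_[p]) ^ (n + 1)
            + uj * (p : ℤ_[p]) ^ (n + 2)) := by
    intro j
    induction j with
    | zero => simp
    | succ j ih =>
      have hM : ((δ ^ (j + 1) : GL (Fin 2) ℤ_[p]) : Matrix (Fin 2) (Fin 2) ℤ_[p])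
          = (δ : Matrix (Fin 2) (Fin 2) ℤ_[p])
            * ((δ ^ j : GL (Fin 2) ℤ_[p]) : Matrix (Fin 2) (Fin 2) ℤ_[p]) := by
        rw [pow_succ']; rfl
      set A : Matrix (Fin 2) (Fin 2) ℤ_[p] := (δ : Matrix (Fin 2) (Fin 2) ℤ_[p]) with hA
      set B : Matrix (Fin 2) (Fin 2) ℤ_[p]
        := ((δ ^ j : GL (Fin 2) ℤ_[p]) : Matrix (Fin 2) (Fin 2) ℤ_[p]) with hB
      refine ⟨fun i k => ?_, fun _ => ?_⟩
      · have hmat : A * B - 1 = A * (B - 1) + (A - 1) := by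
          rw [Matrix.mul_sub, Matrix.mul_one]; abel
        have h1 : ((A * B - 1) i k)
            = A i 0 * ((B - 1) 0 k) + A i 1 * ((B - 1) 1 k)
              + ((A - 1) i k) := by
          rw [hmat, Matrix.add_apply, Matrix.mul_apply, Fin.sum_univ_two]
        rw [hM, h1]
        exact dvd_add (dvd_add (Dvd.dvd.mul_left (ih.1 0 k) _)
          (Dvd.dvd.mul_left (ih.1 1 k) _)) (hδ i k)
      · -- entry formula
        have hmul : ((δ ^ (j + 1) : GL (Fin 2) ℤ_[p]) : Matrix (Fin 2) (Fin 2) ℤ_[p]) 1 0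
            = A 1 0 * B 0 0 + A 1 1 * B 1 0 := by
          rw [hM]; simp [Matrix.mul_apply, Fin.sum_univ_two]
        obtain ⟨e, he⟩ := hδ 1 1
        have hA11 : A 1 1 = 1 + (p : ℤ_[p]) ^ 2 * e := by
          have := he
          simp [Matrix.sub_apply, Matrix.one_apply] at this
          linear_combination this
        obtain ⟨f, hf⟩ := ih.1 0 0
        have hB00 : B 0 0 = 1 + (p : ℤ_[p]) ^ 2 * f := by
          simp [Matrix.sub_apply, Matrix.one_apply] at hf
          linear_combination hf
        obtain ⟨v, hv⟩ := hpn
        rcases Nat.eq_zero_or_pos j with hj0 | hj0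
        · subst hj0
          refine ⟨u, ?_⟩
          have hB1 : B = 1 := by simp [hB]
          rw [hmul, hB1]
          simp only [Matrix.one_apply_eq, Matrix.one_apply_ne (by decide : (1 : Fin 2) ≠ 0),
            mul_zero, add_zero, mul_one]
          rw [hc]
          push_cast
          ring
        · obtain ⟨uj, huj⟩ := ih.2 hj0
          refine ⟨u + uj + f * ((m₁ : ℤ_[p]) + (m₂ : ℤ_[p]) * p + u * p ^ 2)
            + e * ((j : ℤ_[p]) * m₁ + (j : ℤ_[p]) * m₂ * p + uj * p ^ 2), ?_⟩
          rw [hmul, hA11, hB00, hc, huj]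
          push_cast
          ring
  intro j hj
  exact (key j).2 hj
end

section
/- Let p be a prime and let δ ∈ GL₂(ℤ_p) be congruent to the identity modulo p², and suppose the lower-left entry of δ has p-adic valuation exactly n₀ < ∞ (with n₀ ≥ 2). Then for every n ≥ n₀, the minimal positive integer k such that the lower-left entry of δ^k is divisible by pⁿ equals p^{n−n₀}; moreover the lower-left entry of δ^{p^{n−n₀}} has p-adic valuation exactly n. -/
/-!
Write `δ = 1 + M`, where the entries of `M` are divisible by `p²` and `v_p(M₁₀) = n₀`.
By the binomial theorem the lower-left entry of `δ^k` is
`k M₁₀ + ∑_{j ≥ 1} C(k, j+1) (M^(j+1))₁₀`.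
The linear term has valuation exactly `n₀ + v_p(k)`. In the other terms
`v_p((M^(j+1))₁₀) ≥ n₀ + 2j` and, from `k C(k-1, j) = C(k, j+1) (j+1)` and `v_p(j+1) ≤ j`,
`v_p(C(k, j+1)) ≥ v_p(k) - j`; so they are divisible by `p^(n₀ + v_p(k) + 1)`. Hence the
lower-left entry of `δ^k` has valuation `n₀ + v_p(k)`, which is `≥ n` iff `p^(n-n₀) ∣ k`.
-/

open Finset

namespace Matrix

variable {n R : Type*} [Fintype n] [DecidableEq n] [CommSemiring R]

theorem pow_apply_dvd_pow {q : R} {M : Matrix n n R} (hM : ∀ i j, q ∣ M i j) (k : ℕ)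
    (i j : n) : q ^ k ∣ (M ^ k) i j := by
  induction k generalizing j with
  | zero => by_cases hij : i = j <;> simp [hij]
  | succ k ih =>
    rw [pow_succ, pow_succ, mul_apply]
    exact dvd_sum fun l _ => mul_dvd_mul (ih l) (hM l j)

theorem pow_succ_apply_one_zero_dvd {q r : R} {M : Matrix (Fin 2) (Fin 2) R}
    (hM : ∀ i j, q ∣ M i j) (hr : r ∣ M 1 0) (k : ℕ) :
    q ^ k * r ∣ (M ^ (k + 1)) 1 0 := by
  induction k with
  | zero => simpa using hr
  | succ k ih =>
    rw [pow_succ M, mul_apply, Fin.sum_univ_two]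
    refine dvd_add ?_ (mul_dvd_mul (pow_apply_dvd_pow hM _ 1 1) hr)
    rw [pow_succ, mul_right_comm]
    exact mul_dvd_mul ih (hM 0 0)

theorem one_add_pow_apply_one_zero (M : Matrix (Fin 2) (Fin 2) R) (k : ℕ) :
    ((1 + M) ^ k) 1 0 = ∑ j ∈ range k, (k.choose (j + 1) : R) * (M ^ (j + 1)) 1 0 := by
  rw [add_comm, (Commute.one_right M).add_pow, sum_apply, sum_range_succ']
  simp [← diagonal_natCast, mul_diagonal, mul_comm]

end Matrix

theorem Nat.pow_padicValNat_dvd_choose_mul_pow {p k : ℕ} [Fact p.Prime] (hk : k ≠ 0) (j : ℕ) :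
    p ^ padicValNat p k ∣ k.choose (j + 1) * p ^ j := by
  obtain ⟨k, rfl⟩ := Nat.exists_eq_succ_of_ne_zero hk
  rcases eq_or_ne ((k + 1).choose (j + 1)) 0 with hC | hC
  · simp [hC]
  have hC' : k.choose j ≠ 0 := fun h => hC (by simpa [h] using (k.add_one_mul_choose_eq j).symm)
  have hval := congrArg (padicValNat p) (k.add_one_mul_choose_eq j)
  rw [padicValNat.mul hk hC', padicValNat.mul hC j.succ_ne_zero] at hval
  rw [padicValNat_dvd_iff_le (mul_ne_zero hC (pow_ne_zero _ (Fact.out : p.Prime).ne_zero)),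
    padicValNat.mul hC (pow_ne_zero _ (Fact.out : p.Prime).ne_zero), padicValNat.prime_pow]
  have := padicValNat_lt_self (p := p) j.succ_ne_zero
  omega

namespace PadicInt

variable {p : ℕ} [Fact p.Prime]

theorem emultiplicity_natCast {k : ℕ} (hk : k ≠ 0) :
    emultiplicity (p : ℤ_[p]) (k : ℤ_[p]) = padicValNat p k := by
  rw [padicValNat_eq_emultiplicity hk, ← Int.natCast_emultiplicity,
    emultiplicity_eq_emultiplicity_iff]
  intro n
  exact_mod_cast pow_p_dvd_int_iff n k

theorem emultiplicity_pow_apply_one_zero {A : Matrix (Fin 2) (Fin 2) ℤ_[p]}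
    (hA : ∀ i j, (p : ℤ_[p]) ^ 2 ∣ (A - 1) i j) {n₀ : ℕ}
    (hc : emultiplicity (p : ℤ_[p]) (A 1 0) = n₀) {k : ℕ} (hk : k ≠ 0) :
    emultiplicity (p : ℤ_[p]) ((A ^ k) 1 0) = n₀ + padicValNat p k := by
  obtain ⟨M, rfl⟩ : ∃ M, A = 1 + M := ⟨A - 1, by abel⟩
  simp only [add_sub_cancel_left] at hA
  have hM : M 1 0 = (1 + M) 1 0 := by simp
  rw [← hM] at hc
  set v := padicValNat p k
  have hterm : ∀ j, (p : ℤ_[p]) ^ (v + n₀ + j) ∣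
      (k.choose (j + 1) : ℤ_[p]) * (M ^ (j + 1)) 1 0 := by
    intro j
    obtain ⟨y, hy⟩ := M.pow_succ_apply_one_zero_dvd hA (pow_dvd_of_le_emultiplicity hc.ge) j
    have hchoose : (p : ℤ_[p]) ^ v ∣ (k.choose (j + 1) : ℤ_[p]) * (p : ℤ_[p]) ^ j := by
      exact_mod_cast Nat.cast_dvd_cast (Nat.pow_padicValNat_dvd_choose_mul_pow hk j)
    rw [hy, add_assoc, pow_add, show ((p : ℤ_[p]) ^ 2) ^ j * (p : ℤ_[p]) ^ n₀ * y
      = (p : ℤ_[p]) ^ j * ((p : ℤ_[p]) ^ (n₀ + j) * y) by ring, ← mul_assoc]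
    exact mul_dvd_mul hchoose (dvd_mul_right _ _)
  have hlinear : emultiplicity (p : ℤ_[p]) ((k.choose 1 : ℤ_[p]) * (M ^ 1) 1 0) = n₀ + v := by
    rw [Nat.choose_one_right, pow_one, emultiplicity_mul prime_p, emultiplicity_natCast hk, hc,
      add_comm]
  have htail : (p : ℤ_[p]) ^ (v + n₀ + 1) ∣
      ∑ j ∈ (range k).erase 0, (k.choose (j + 1) : ℤ_[p]) * (M ^ (j + 1)) 1 0 :=
    dvd_sum fun j hj => (pow_dvd_pow _ (by grind)).trans (hterm j)
  rw [M.one_add_pow_apply_one_zero, ← add_sum_erase _ _ (mem_range.2 (Nat.pos_of_ne_zero hk)),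
    add_comm, emultiplicity_add_of_gt] <;> rw [hlinear]
  refine lt_of_lt_of_le ?_ (le_emultiplicity_of_pow_dvd htail)
  exact_mod_cast (by omega : n₀ + v < v + n₀ + 1)

end PadicInt

theorem stmt_4_general (p : ℕ) [Fact p.Prime] (δ : GL (Fin 2) ℤ_[p])
    (hδ : ∀ i j : Fin 2, ((p : ℤ_[p]) ^ 2) ∣
      (((δ : Matrix (Fin 2) (Fin 2) ℤ_[p]) - 1) i j))
    (n₀ : ℕ)
    (hdvd : (p : ℤ_[p]) ^ n₀ ∣ (δ : Matrix (Fin 2) (Fin 2) ℤ_[p]) 1 0)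
    (hndvd : ¬ (p : ℤ_[p]) ^ (n₀ + 1) ∣ (δ : Matrix (Fin 2) (Fin 2) ℤ_[p]) 1 0) :
    ∀ n : ℕ, n₀ ≤ n →
      IsLeast {k : ℕ | 0 < k ∧
          (p : ℤ_[p]) ^ n ∣ ((δ ^ k : GL (Fin 2) ℤ_[p]) : Matrix (Fin 2) (Fin 2) ℤ_[p]) 1 0}
        (p ^ (n - n₀))
      ∧ ¬ (p : ℤ_[p]) ^ (n + 1) ∣
          ((δ ^ (p ^ (n - n₀)) : GL (Fin 2) ℤ_[p]) : Matrix (Fin 2) (Fin 2) ℤ_[p]) 1 0 := by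
  have hval : ∀ k ≠ 0, emultiplicity (p : ℤ_[p])
      (((δ ^ k : GL (Fin 2) ℤ_[p]) : Matrix (Fin 2) (Fin 2) ℤ_[p]) 1 0) = n₀ + padicValNat p k :=
    fun k hk => Units.val_pow_eq_pow_val δ k ▸
      PadicInt.emultiplicity_pow_apply_one_zero hδ (emultiplicity_eq_coe.2 ⟨hdvd, hndvd⟩) hk
  intro n hn
  have hp : 0 < p ^ (n - n₀) := pow_pos (Fact.out : p.Prime).pos _
  have hexact := hval _ hp.ne'
  rw [padicValNat.prime_pow, ← Nat.cast_add, Nat.add_sub_cancel' hn,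
    emultiplicity_eq_coe] at hexact
  refine ⟨⟨⟨hp, hexact.1⟩, fun k ⟨hk, hkdvd⟩ => ?_⟩, hexact.2⟩
  have hle := le_emultiplicity_of_pow_dvd hkdvd
  rw [hval k hk.ne', ← Nat.cast_add, Nat.cast_le] at hle
  exact Nat.le_of_dvd hk ((pow_dvd_pow p (by omega)).trans pow_padicValNat_dvd)

/-- Let `δ ∈ GL₂(ℤ_p)` be congruent to the identity mod `p²` with lower-left
entry of p-adic valuation exactly `n₀` (`2 ≤ n₀`).  Then for every `n ≥ n₀`, the minimal
positive `k` such that `pⁿ` divides the lower-left entry of `δ^k` is `p^(n-n₀)`; moreover the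
lower-left entry of `δ^(p^(n-n₀))` has valuation exactly `n`. -/
theorem stmt_4 (p : ℕ) [Fact p.Prime] (δ : GL (Fin 2) ℤ_[p])
    (hδ : ∀ i j : Fin 2, ((p : ℤ_[p]) ^ 2) ∣
      (((δ : Matrix (Fin 2) (Fin 2) ℤ_[p]) - 1) i j))
    (n₀ : ℕ) (hn₀ : 2 ≤ n₀)
    (hdvd : (p : ℤ_[p]) ^ n₀ ∣ (δ : Matrix (Fin 2) (Fin 2) ℤ_[p]) 1 0)
    (hndvd : ¬ (p : ℤ_[p]) ^ (n₀ + 1) ∣ (δ : Matrix (Fin 2) (Fin 2) ℤ_[p]) 1 0) :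
    ∀ n : ℕ, n₀ ≤ n →
      IsLeast {k : ℕ | 0 < k ∧
          (p : ℤ_[p]) ^ n ∣ ((δ ^ k : GL (Fin 2) ℤ_[p]) : Matrix (Fin 2) (Fin 2) ℤ_[p]) 1 0}
        (p ^ (n - n₀))
      ∧ ¬ (p : ℤ_[p]) ^ (n + 1) ∣
          ((δ ^ (p ^ (n - n₀)) : GL (Fin 2) ℤ_[p]) : Matrix (Fin 2) (Fin 2) ℤ_[p]) 1 0 :=
  stmt_4_general p δ hδ n₀ hdvd hndvd
end

section
/- Let α be a real quadratic irrational with Galois conjugate α', and set g_α to be the matrix [[α, α'],[1,1]] if α > α' and [[α, −α'],[1,−1]] otherwise. Then there exists a matrix γ ∈ GL₂(ℤ) and t > 0 with γ g_α = g_α · diag(e^{t/2}, e^{−t/2}). Consequently, the orbit of the point Γ g_α under the diagonal subgroup A = {diag(e^{t/2}, e^{−t/2})} in Γ\PGL₂(ℝ) (Γ = PGL₂(ℤ)) is periodic. -/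
/-- For a real quadratic irrational `α` with Galois conjugate `α'`, letting
`g_α = [[α, α'],[1,1]]` if `α > α'` and `[[α, -α'],[1,-1]]` otherwise, there exist
`γ ∈ GL₂(ℤ)` and `t > 0` with `γ g_α = g_α diag(e^{t/2}, e^{-t/2})`; i.e. the orbit of
`Γ g_α` under the diagonal flow in `Γ\PGL₂(ℝ)` is periodic. -/
theorem stmt_9 (α α' : ℝ) (hirr : Irrational α)
    (a b c : ℤ) (ha : a ≠ 0)
    (hα : (a : ℝ) * α ^ 2 + (b : ℝ) * α + (c : ℝ) = 0)
    (hα' : (a : ℝ) * α' ^ 2 + (b : ℝ) * α' + (c : ℝ) = 0)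
    (hne : α ≠ α') :
    ∃ (γ : Matrix (Fin 2) (Fin 2) ℤ) (t : ℝ), 0 < t ∧ (γ.det = 1 ∨ γ.det = -1) ∧
      (γ.map (Int.cast : ℤ → ℝ)) *
        (if α' < α then !![α, α'; 1, 1] else !![α, -α'; 1, -1])
      = (if α' < α then !![α, α'; 1, 1] else !![α, -α'; 1, -1]) *
          Matrix.diagonal ![Real.exp (t / 2), Real.exp (-t / 2)] := by
  have hsub : α - α' ≠ 0 := sub_ne_zero.mpr hne
  -- Vieta
  have hsum : (a : ℝ) * (α + α') = -b := by
    have h : (α - α') * ((a : ℝ) * (α + α') + b) = 0 := by linear_combination hα - hα'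
    rcases mul_eq_zero.mp h with h | h
    · exact absurd h hsub
    · linarith
  have hprod : (a : ℝ) * (α * α') = c := by linear_combination α * hsum - hα
  -- discriminant
  set s₀ : ℝ := 2 * a * α + b with hs₀def
  have hkey : s₀ ^ 2 = (b : ℝ) ^ 2 - 4 * a * c := by
    rw [hs₀def]; linear_combination (4 * a) * hα
  have hs₀ : s₀ ≠ 0 := by
    intro h
    apply hirr
    exact ⟨(-b) / (2 * a), by
      push_cast
      field_simp
      rw [hs₀def] at h
      linarith⟩
  set D : ℤ := b ^ 2 - 4 * a * c with hDdef
  have hDpos : 0 < D := by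
    have : (0:ℝ) < (D:ℝ) := by
      push_cast [hDdef]
      rw [← hkey]
      positivity
    exact_mod_cast this
  have hDns : ¬ IsSquare D := by
    rintro ⟨k, hk⟩
    apply hirr
    have hkR : (s₀)^2 = ((k:ℝ))^2 := by
      rw [hkey]
      have : (D:ℝ) = (k:ℝ)*(k:ℝ) := by exact_mod_cast congrArg (Int.cast : ℤ → ℝ) hk
      push_cast [hDdef] at this ⊢
      rw [sq]; linarith
    rcases sq_eq_sq_iff_eq_or_eq_neg.mp hkR with h | h
    · exact ⟨(k - b) / (2 * a), by push_cast; field_simp; rw [hs₀def] at h; linarith⟩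
    · exact ⟨(-k - b) / (2 * a), by push_cast; field_simp; rw [hs₀def] at h; push_cast at h; linarith⟩
  obtain ⟨x, y, hpell, hy⟩ := Pell.exists_of_not_isSquare hDpos hDns
  have hy2 : 0 < y ^ 2 := by
    have := pow_pos (abs_pos.mpr hy) 2
    rwa [sq_abs] at this
  -- normalize signs
  set x' : ℤ := |x| with hx'
  have hx'pos : 1 ≤ x' := by
    rcases eq_or_ne x 0 with h | h
    · exfalso; rw [h] at hpell; nlinarith [mul_pos hDpos hy2]
    · exact Int.one_le_abs h
  set y' : ℤ := if 0 < s₀ then |y| else -|y| with hy'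
  have hy'sq : y' ^ 2 = y ^ 2 := by rw [hy']; split <;> simp [sq_abs]
  have hpell' : x' ^ 2 - D * y' ^ 2 = 1 := by rw [hx', sq_abs, hy'sq]; exact hpell
  have hy's₀ : 0 < (y' : ℝ) * s₀ := by
    have hyabs : (0:ℝ) < |(y:ℝ)| := by
      simp only [abs_pos]; exact_mod_cast hy
    rcases lt_or_ge 0 s₀ with h | h
    · rw [hy', if_pos h]; push_cast; exact mul_pos hyabs h
    · rw [hy', if_neg (not_lt.mpr h)]
      push_cast
      have : s₀ < 0 := lt_of_le_of_ne h hs₀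
      nlinarith [hyabs]
  -- the unit
  set r₀ : ℤ := 2 * y' with hr₀
  set s : ℤ := x' + b * y' with hsdef
  set ω : ℝ := (a:ℝ) * r₀ * α + s with hω
  set ω' : ℝ := (a:ℝ) * r₀ * α' + s with hω'
  have hintid : s ^ 2 - b * r₀ * s + a * c * r₀ ^ 2 = x' ^ 2 - D * y' ^ 2 := by
    rw [hsdef, hr₀, hDdef]; ring
  have hunit : ω * ω' = 1 := by
    have h1 : ω * ω' = (a : ℝ) * r₀^2 * ((a:ℝ) * (α * α')) + (r₀ * s) * ((a:ℝ)*(α+α')) + s^2 := by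
      rw [hω, hω']; ring
    rw [h1, hprod, hsum]
    have h2 : (a : ℝ) * (r₀:ℝ)^2 * c + ((r₀:ℝ)*(s:ℝ)) * (-(b:ℝ)) + (s:ℝ)^2
        = ((s^2 - b*r₀*s + a*c*r₀^2 : ℤ) : ℝ) := by push_cast; ring
    rw [h2, hintid, hpell']; norm_num
  have hωval : ω = (x' : ℝ) + (y' : ℝ) * s₀ := by rw [hω, hr₀, hsdef, hs₀def]; push_cast; ring
  have hωgt : 1 < ω := by
    rw [hωval]
    have : (1:ℝ) ≤ (x':ℝ) := by exact_mod_cast hx'pos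
    linarith [hy's₀]
  have hωpos : 0 < ω := by linarith
  refine ⟨!![s - r₀ * b, -r₀ * c; a * r₀, s], 2 * Real.log ω, ?_, ?_, ?_⟩
  · have := Real.log_pos hωgt; linarith
  · left
    rw [Matrix.det_fin_two_of]
    have h3 : (s - r₀*b)*s - (-r₀)*c*(a*r₀) = s^2 - b*r₀*s + a*c*r₀^2 := by ring
    rw [h3, hintid]; exact hpell'
  · have hexp1 : Real.exp (2 * Real.log ω / 2) = ω := by
      rw [show 2 * Real.log ω / 2 = Real.log ω by ring, Real.exp_log hωpos]
    have hexp2 : Real.exp (-(2 * Real.log ω) / 2) = ω' := by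
      rw [show -(2 * Real.log ω) / 2 = -Real.log ω by ring, Real.exp_neg, Real.exp_log hωpos]
      field_simp
      linarith [hunit]
    rw [hexp1, hexp2]
    -- entry facts
    have e10 : (a:ℝ) * r₀ * α + s = ω := hω.symm
    have e11 : (a:ℝ) * r₀ * α' + s = ω' := hω'.symm
    have e00 : ((s:ℝ) - (r₀:ℝ)*(b:ℝ)) * α + (-((r₀:ℝ)*(c:ℝ))) = α * ω := by
      rw [hω]; linear_combination (-(r₀:ℝ)) * hα
    have e01 : ((s:ℝ) - (r₀:ℝ)*(b:ℝ)) * α' + (-((r₀:ℝ)*(c:ℝ))) = α' * ω' := by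
      rw [hω']; linear_combination (-(r₀:ℝ)) * hα'
    split <;>
    · ext i j
      fin_cases i <;> fin_cases j <;>
        simp [Matrix.mul_apply, Fin.sum_univ_two, Matrix.diagonal] <;>
        push_cast <;>
        first
          | linear_combination e00 | linear_combination e01
          | linear_combination e10 | linear_combination e11
          | linear_combination -e01 | linear_combination -e11
end

section
/- Let S: (0,1) ∖ ℚ → (0,1) ∖ ℚ be the Gauss map S(y) = 1/y − ⌊1/y⌋, and let D = {(y,z) : y ∈ (0,1), 0 < z < 1/(1+y)}. Define S̄: D → D by S̄(y,z) = (S(y), y(1 − yz)) (on points with y irrational). Then the normalized restriction λ of Lebesgue measure to D is S̄-invariant, and the pushforward of λ under the projection p(y,z) = y to the first coordinate is the Gauss–Kuzmin measure ν(A) = (1/log 2)∫_A dx/(1+x). -/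
/-! The strip of `D` on which the first continued fraction digit of `y` is `n` is mapped by `S̄`
through the smooth branch `(y, z) ↦ (1/y - n, y (1 - y z))`, whose Jacobian determinant is `1`,
injectively onto the part of `D` where `⌊1/z - y⌋ = n`. Both families of strips cover `D` up to
countably many vertical lines and graphs, so `S̄` preserves Lebesgue measure on `D`. The
projection statement is Fubini: the fibre of `D` over `y` has length `1/(1+y)`. -/

open MeasureTheory

/-- The Gauss map `y ↦ {1/y}`. -/
noncomputable def gaussMap : ℝ → ℝ := fun y => Int.fract y⁻¹

/-- The domain `D = {(y,z) : y ∈ (0,1), 0 < z < 1/(1+y)}` of the invertible extension. -/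
def Dset : Set (ℝ × ℝ) :=
  {q | q.1 ∈ Set.Ioo (0 : ℝ) 1 ∧ 0 < q.2 ∧ q.2 < (1 + q.1)⁻¹}

/-- The normalized restriction `λ` of Lebesgue measure to `D`. -/
noncomputable def lamD : Measure (ℝ × ℝ) :=
  (ENNReal.ofReal (Real.log 2)⁻¹) • (volume.restrict Dset)

/-- The Gauss–Kuzmin measure `ν(A) = (1/log 2) ∫_A dx/(1+x)` on `(0,1)`. -/
noncomputable def gaussKuzmin : Measure ℝ :=
  (volume.restrict (Set.Ioo (0 : ℝ) 1)).withDensity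
    fun x => ENNReal.ofReal ((Real.log 2)⁻¹ * (1 + x)⁻¹)

open Set Function

noncomputable def gaussExtension : ℝ × ℝ → ℝ × ℝ :=
  fun q => (gaussMap q.1, q.1 * (1 - q.1 * q.2))

section Fibres

variable {α : Type*} [MeasurableSpace α] {μ : Measure α}

theorem map_fst_restrict_regionBetween {f g : α → ℝ} {s : Set α} (hf : Measurable f)
    (hg : Measurable g) (hs : MeasurableSet s) :
    ((μ.prod volume).restrict (regionBetween f g s)).map Prod.fst =
      (μ.restrict s).withDensity fun x => ENNReal.ofReal (g x - f x) := by
  ext t ht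
  have hfibre : Prod.fst ⁻¹' t ∩ regionBetween f g s = regionBetween f g (t ∩ s) := by
    ext; simp only [regionBetween, mem_inter_iff, mem_preimage, mem_ofPred_eq, and_assoc]
  rw [Measure.map_apply measurable_fst ht, Measure.restrict_apply (measurable_fst ht),
    withDensity_apply _ ht, Measure.restrict_restrict ht, hfibre,
    volume_regionBetween_eq_lintegral' hf hg (ht.inter hs)]
  rfl

theorem prod_measure_graph_eq_zero {f : α → ℝ} (hf : Measurable f) :
    μ.prod volume {q : α × ℝ | q.2 = f q.1} = 0 := by
  rw [Measure.measure_prod_null (measurableSet_graph hf)]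
  filter_upwards with x
  have hslice : Prod.mk x ⁻¹' {q : α × ℝ | q.2 = f q.1} = {f x} := by ext; simp
  rw [hslice, Pi.zero_apply, Real.volume_singleton]

theorem prod_measure_preimage_fst_eq_zero {β : Type*} [MeasurableSpace β] {ν : Measure β}
    [SFinite ν] {s : Set α} (hs : μ s = 0) :
    μ.prod ν (Prod.fst ⁻¹' s) = 0 := by
  rw [← prod_univ, Measure.prod_prod, hs, zero_mul]

end Fibres

theorem pairwise_disjoint_Ioo_natCast :
    Pairwise (Disjoint on fun n : ℕ => Ioo (n : ℝ) (n + 1)) :=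
  fun m n hmn => by
    simpa using pairwise_disjoint_Ioo_intCast ℝ (Nat.cast_injective.ne hmn)

theorem mem_range_natCast_or_exists_mem_Ioo {t : ℝ} (ht : 0 ≤ t) :
    t ∈ range ((↑) : ℕ → ℝ) ∨ ∃ n : ℕ, t ∈ Ioo (n : ℝ) (n + 1) := by
  rcases (Nat.floor_le ht).eq_or_lt with h | h
  · exact Or.inl ⟨_, h⟩
  · exact Or.inr ⟨_, h, Nat.lt_floor_add_one t⟩

theorem ae_eq_of_subset_of_measure_diff_eq_zero {α : Type*} [MeasurableSpace α]
    {μ : Measure α} {s t : Set α} (hst : s ⊆ t) (h : μ (t \ s) = 0) : s =ᵐ[μ] t :=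
  ae_eq_set.2 ⟨by rw [sdiff_eq_empty.2 hst, measure_empty], h⟩

theorem Dset_eq_regionBetween : Dset = regionBetween 0 (fun y => (1 + y)⁻¹) (Ioo 0 1) := rfl

theorem measurableSet_Dset : MeasurableSet Dset :=
  measurableSet_regionBetween measurable_const (measurable_const.add measurable_id).inv
    measurableSet_Ioo

theorem one_add_lt_inv_of_mem_Dset {q : ℝ × ℝ} (hq : q ∈ Dset) : 1 + q.1 < q.2⁻¹ :=
  (lt_inv_comm₀ hq.2.1 (by linarith [hq.1.1])).1 hq.2.2

def digitStrip (n : ℕ) : Set (ℝ × ℝ) :=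
  Dset ∩ {q | q.1⁻¹ ∈ Ioo (n : ℝ) (n + 1)}

def digitStripImage (n : ℕ) : Set (ℝ × ℝ) :=
  Dset ∩ {q | q.2⁻¹ - q.1 ∈ Ioo (n : ℝ) (n + 1)}

theorem measurableSet_digitStrip (n : ℕ) : MeasurableSet (digitStrip n) :=
  measurableSet_Dset.inter (measurable_fst.inv measurableSet_Ioo)

theorem measurableSet_digitStripImage (n : ℕ) : MeasurableSet (digitStripImage n) :=
  measurableSet_Dset.inter ((measurable_snd.inv.sub measurable_fst) measurableSet_Ioo)

theorem pairwise_disjoint_digitStrip : Pairwise (Disjoint on digitStrip) := fun _ _ h =>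
  ((pairwise_disjoint_Ioo_natCast h).preimage _).mono inter_subset_right inter_subset_right

theorem pairwise_disjoint_digitStripImage : Pairwise (Disjoint on digitStripImage) :=
  fun _ _ h =>
  ((pairwise_disjoint_Ioo_natCast h).preimage _).mono inter_subset_right inter_subset_right

theorem iUnion_digitStrip_ae_eq : (⋃ n, digitStrip n) =ᵐ[volume] Dset := by
  refine ae_eq_of_subset_of_measure_diff_eq_zero (iUnion_subset fun _ => inter_subset_left) ?_
  have hcover : Dset \ ⋃ n, digitStrip n ⊆
      Prod.fst ⁻¹' (Inv.inv ⁻¹' range ((↑) : ℕ → ℝ)) := by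
    rintro q ⟨hq, hnot⟩
    refine (mem_range_natCast_or_exists_mem_Ioo (inv_nonneg.2 hq.1.1.le)).resolve_right ?_
    rintro ⟨n, hn⟩
    exact hnot (mem_iUnion.2 ⟨n, hq, hn⟩)
  refine measure_mono_null hcover ?_
  rw [Measure.volume_eq_prod]
  exact prod_measure_preimage_fst_eq_zero
    (((countable_range _).preimage inv_injective).measure_zero volume)

theorem iUnion_digitStripImage_ae_eq : (⋃ n, digitStripImage n) =ᵐ[volume] Dset := by
  refine ae_eq_of_subset_of_measure_diff_eq_zero (iUnion_subset fun _ => inter_subset_left) ?_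
  have hcover :
      Dset \ ⋃ n, digitStripImage n ⊆ ⋃ n : ℕ, {q | q.2 = ((n : ℝ) + q.1)⁻¹} := by
    rintro q ⟨hq, hnot⟩
    have hpos : 0 ≤ q.2⁻¹ - q.1 := by linarith [one_add_lt_inv_of_mem_Dset hq]
    rcases mem_range_natCast_or_exists_mem_Ioo hpos with ⟨n, hn⟩ | ⟨n, hn⟩
    · refine mem_iUnion.2 ⟨n, ?_⟩
      rw [mem_ofPred_eq, hn, sub_add_cancel, inv_inv]
    · exact (hnot (mem_iUnion.2 ⟨n, hq, hn⟩)).elim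
  refine measure_mono_null hcover (measure_iUnion_null fun n => ?_)
  rw [Measure.volume_eq_prod]
  exact prod_measure_graph_eq_zero (measurable_const.add measurable_id).inv

theorem LinearMap.det_prod_self_eq {R : Type*} [CommRing R] (L : R × R →ₗ[R] R × R) :
    L.det = (L (1, 0)).1 * (L (0, 1)).2 - (L (0, 1)).1 * (L (1, 0)).2 := by
  rw [← LinearMap.det_toMatrix (Module.Basis.finTwoProd R), Matrix.det_fin_two]
  simp [LinearMap.toMatrix_apply]

theorem gaussMap_eq_of_inv_mem_Ioo {y : ℝ} {n : ℕ} (hy : y⁻¹ ∈ Ioo (n : ℝ) (n + 1)) :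
    gaussMap y = y⁻¹ - n := by
  have hfloor : ⌊y⁻¹⌋ = n :=
    Int.floor_eq_iff.2 ⟨by simpa using hy.1.le, by simpa using hy.2⟩
  rw [gaussMap, Int.fract, hfloor, Int.cast_natCast]

noncomputable def gaussExtensionBranch (c : ℝ) (q : ℝ × ℝ) : ℝ × ℝ :=
  (q.1⁻¹ - c, q.1 * (1 - q.1 * q.2))

theorem eqOn_gaussExtension_digitStrip (n : ℕ) :
    EqOn gaussExtension (gaussExtensionBranch n) (digitStrip n) := fun q hq => by
  rw [gaussExtension, gaussExtensionBranch, gaussMap_eq_of_inv_mem_Ioo hq.2]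

noncomputable def gaussExtensionBranchDeriv (q : ℝ × ℝ) : ℝ × ℝ →L[ℝ] ℝ × ℝ :=
  (-(q.1 ^ 2)⁻¹ • ContinuousLinearMap.fst ℝ ℝ ℝ).prod
    ((1 - 2 * q.1 * q.2) • ContinuousLinearMap.fst ℝ ℝ ℝ -
      q.1 ^ 2 • ContinuousLinearMap.snd ℝ ℝ ℝ)

theorem hasFDerivAt_gaussExtensionBranch (c : ℝ) {q : ℝ × ℝ} (hq : q.1 ≠ 0) :
    HasFDerivAt (gaussExtensionBranch c) (gaussExtensionBranchDeriv q) q := by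
  refine HasFDerivAt.prodMk ?_ ?_
  · exact ((hasDerivAt_inv hq).comp_hasFDerivAt q hasFDerivAt_fst).sub_const c
  · refine (hasFDerivAt_fst.mul ((hasFDerivAt_const 1 q).sub
      (hasFDerivAt_fst.mul hasFDerivAt_snd))).congr_fderiv ?_
    ext <;> simp <;> ring

theorem det_gaussExtensionBranchDeriv {q : ℝ × ℝ} (hq : q.1 ≠ 0) :
    (gaussExtensionBranchDeriv q).det = 1 := by
  rw [ContinuousLinearMap.det, LinearMap.det_prod_self_eq]
  simp [gaussExtensionBranchDeriv, hq]

theorem injOn_gaussExtensionBranch (c : ℝ) : InjOn (gaussExtensionBranch c) {q | q.1 ≠ 0} := by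
  rintro ⟨y, z⟩ hy ⟨y', z'⟩ - h
  simp only [gaussExtensionBranch, Prod.mk.injEq, sub_left_inj, inv_inj] at h
  obtain ⟨rfl, h⟩ := h
  simp only [Prod.mk.injEq, true_and]
  exact (by simpa using h : z = z' ∨ y = 0).resolve_right hy

theorem one_le_natCast_of_one_lt_of_lt {n : ℕ} {t : ℝ} (h₁ : 1 < t) (h₂ : t < n + 1) :
    (1 : ℝ) ≤ n :=
  Nat.one_le_cast.2 ((Nat.cast_pos (α := ℝ)).1 (by linarith))

theorem mk_mem_Dset {x w : ℝ} (hx : x ∈ Ioo 0 1) (hw : 0 < w) (h : 1 < w⁻¹ - x) :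
    (x, w) ∈ Dset :=
  ⟨hx, hw, (lt_inv_comm₀ hw (by linarith [hx.1])).2 (by linarith)⟩

theorem mapsTo_gaussExtensionBranch_digitStrip (n : ℕ) :
    MapsTo (gaussExtensionBranch n) (digitStrip n) (digitStripImage n) := by
  rintro ⟨y, z⟩ ⟨⟨hy, hz₀, hz⟩, hn⟩
  dsimp only at hy hz₀ hz hn
  have hn₁ : (1 : ℝ) ≤ n := one_le_natCast_of_one_lt_of_lt ((one_lt_inv₀ hy.1).2 hy.2) hn.2
  have hzy : z * (1 + y) < 1 := by
    simpa [(by linarith [hy.1] : (0 : ℝ) < 1 + y).ne'] using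
      mul_lt_mul_of_pos_right hz (by linarith [hy.1] : (0 : ℝ) < 1 + y)
  have h₁ : 0 < 1 - y * z := by nlinarith [hy.2]
  -- `z / (1 - y z) ∈ (0, 1)` is the condition `0 < z < 1/(1 + y)` in disguise
  have ht : z / (1 - y * z) ∈ Ioo (0 : ℝ) 1 :=
    ⟨div_pos hz₀ h₁, (div_lt_one h₁).2 (by linarith)⟩
  have key : (y * (1 - y * z))⁻¹ - (y⁻¹ - n) = n + z / (1 - y * z) := by
    field_simp [hy.1.ne']
    ring
  refine ⟨mk_mem_Dset ⟨by linarith [hn.1], by linarith [hn.2]⟩ (mul_pos hy.1 h₁) ?_, ?_⟩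
  · rw [key]; linarith [ht.1]
  · show (y * (1 - y * z))⁻¹ - (y⁻¹ - n) ∈ Ioo (n : ℝ) (n + 1)
    rw [key]
    exact ⟨by linarith [ht.1], by linarith [ht.2]⟩

theorem digitStripImage_subset_image_gaussExtensionBranch (n : ℕ) :
    digitStripImage n ⊆ gaussExtensionBranch n '' digitStrip n := by
  rintro ⟨x, w⟩ ⟨hD, hn⟩
  have hx : x ∈ Ioo 0 1 := hD.1
  have hw₀ : 0 < w := hD.2.1
  have hn₁ : (1 : ℝ) ≤ n :=
    one_le_natCast_of_one_lt_of_lt (by linarith [one_add_lt_inv_of_mem_Dset hD]) hn.2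
  -- the preimage is `y = 1/a`, `z = (y - w)/y²`, rewritten with `1/w = a + s`
  set a : ℝ := n + x with ha_def
  set s : ℝ := w⁻¹ - x - n with hs_def
  have ha : 1 < a := by linarith [hx.1]
  have hs : s ∈ Ioo (0 : ℝ) 1 := ⟨by linarith [hn.1], by linarith [hn.2]⟩
  have hw : w = (a + s)⁻¹ := by rw [show a + s = w⁻¹ by rw [ha_def, hs_def]; ring, inv_inv]
  have hz : s * a / (a + s) < (1 + a⁻¹)⁻¹ := by
    rw [show (1 + a⁻¹)⁻¹ = a / (a + 1) by field_simp,
      div_lt_div_iff₀ (by linarith [hs.1]) (by linarith)]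
    nlinarith [mul_pos (mul_pos (by linarith : 0 < a) (by linarith : 0 < a)) (sub_pos.2 hs.2)]
  refine ⟨(a⁻¹, s * a / (a + s)), ⟨⟨?_, ?_, hz⟩, ?_⟩, ?_⟩
  · exact ⟨inv_pos.2 (by linarith), inv_lt_one_of_one_lt₀ ha⟩
  · exact div_pos (mul_pos hs.1 (by linarith)) (by linarith [hs.1])
  · show a⁻¹⁻¹ ∈ Ioo (n : ℝ) (n + 1)
    rw [inv_inv]
    exact ⟨by linarith [hx.1], by linarith [hx.2]⟩
  · rw [gaussExtensionBranch, hw, Prod.mk.injEq]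
    refine ⟨by rw [inv_inv, ha_def, add_sub_cancel_left], ?_⟩
    have : a + s ≠ 0 := by linarith [hs.1]
    field_simp
    ring

theorem image_gaussExtension_digitStrip (n : ℕ) :
    gaussExtension '' digitStrip n = digitStripImage n := by
  rw [(eqOn_gaussExtension_digitStrip n).image_eq]
  exact (mapsTo_gaussExtensionBranch_digitStrip n).image_subset.antisymm
    (digitStripImage_subset_image_gaussExtensionBranch n)

theorem injOn_gaussExtension_digitStrip (n : ℕ) : InjOn gaussExtension (digitStrip n) :=
  ((injOn_gaussExtensionBranch n).mono fun _ hq => hq.1.1.1.ne').congr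
    (eqOn_gaussExtension_digitStrip n).symm

theorem map_gaussExtension_restrict_digitStrip (n : ℕ) :
    (volume.restrict (digitStrip n)).map gaussExtension =
      volume.restrict (digitStripImage n) := by
  have hne : ∀ q ∈ digitStrip n, q.1 ≠ 0 := fun q hq => hq.1.1.1.ne'
  have hderiv : ∀ q ∈ digitStrip n,
      HasFDerivWithinAt gaussExtension (gaussExtensionBranchDeriv q) (digitStrip n) q :=
    fun q hq => (hasFDerivAt_gaussExtensionBranch n (hne q hq)).hasFDerivWithinAt.congr
      (eqOn_gaussExtension_digitStrip n) (eqOn_gaussExtension_digitStrip n hq)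
  have hdet : (fun q => ENNReal.ofReal |(gaussExtensionBranchDeriv q).det|)
      =ᵐ[volume.restrict (digitStrip n)] 1 :=
    ae_restrict_of_forall_mem (measurableSet_digitStrip n) fun q hq => by
      simp [det_gaussExtensionBranchDeriv (hne q hq)]
  rw [← image_gaussExtension_digitStrip n, ← map_withDensity_abs_det_fderiv_eq_addHaar volume
    (measurableSet_digitStrip n).nullMeasurableSet hderiv (injOn_gaussExtension_digitStrip n),
    withDensity_congr_ae hdet, withDensity_one]

theorem measurable_gaussExtension : Measurable gaussExtension :=
  (measurable_fract.comp measurable_fst.inv).prodMk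
    (measurable_fst.mul (measurable_const.sub (measurable_fst.mul measurable_snd)))

theorem map_gaussExtension_restrict_Dset :
    (volume.restrict Dset).map gaussExtension = volume.restrict Dset := by
  calc (volume.restrict Dset).map gaussExtension
      = (volume.restrict (⋃ n, digitStrip n)).map gaussExtension := by
        rw [Measure.restrict_congr_set iUnion_digitStrip_ae_eq]
    _ = Measure.sum fun n => (volume.restrict (digitStrip n)).map gaussExtension := by
        rw [Measure.restrict_iUnion pairwise_disjoint_digitStrip measurableSet_digitStrip,
          Measure.map_sum measurable_gaussExtension.aemeasurable]
    _ = volume.restrict (⋃ n, digitStripImage n) := by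
        simp_rw [map_gaussExtension_restrict_digitStrip]
        rw [Measure.restrict_iUnion pairwise_disjoint_digitStripImage
          measurableSet_digitStripImage]
    _ = volume.restrict Dset := Measure.restrict_congr_set iUnion_digitStripImage_ae_eq

theorem map_fst_restrict_Dset :
    (volume.restrict Dset).map Prod.fst =
      (volume.restrict (Ioo 0 1)).withDensity fun y => ENNReal.ofReal (1 + y)⁻¹ := by
  rw [Dset_eq_regionBetween, Measure.volume_eq_prod,
    map_fst_restrict_regionBetween measurable_zero (by fun_prop) measurableSet_Ioo]
  simp only [Pi.zero_apply, sub_zero]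

/-- the invertible extension `S̄(y,z) = (S y, y(1-yz))` of the Gauss map
preserves `λ`, and the pushforward of `λ` under the first-coordinate projection is the
Gauss–Kuzmin measure. -/
theorem stmt_10 :
    MeasurePreserving (fun q : ℝ × ℝ => (gaussMap q.1, q.1 * (1 - q.1 * q.2))) lamD lamD
    ∧ Measure.map Prod.fst lamD = gaussKuzmin := by
  refine ⟨⟨measurable_gaussExtension, ?_⟩, ?_⟩
  · rw [lamD, Measure.map_smul]
    exact congrArg _ map_gaussExtension_restrict_Dset
  · rw [lamD, Measure.map_smul, map_fst_restrict_Dset, gaussKuzmin,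
      ← withDensity_smul' _ _ ENNReal.ofReal_ne_top]
    congr 1
    funext x
    rw [Pi.smul_apply, smul_eq_mul,
      ← ENNReal.ofReal_mul (inv_nonneg.2 (Real.log_nonneg one_le_two))]
end

section
/- Let α be a real quadratic irrational. Then the digits of the period of the continued fraction expansion of α are, as a cyclic word, invariant under the action of PGL₂(ℤ): for any γ ∈ PGL₂(ℤ), the Gauss-map period P_{γα} equals P_α (as subsets of [0,1]), and in particular the period lengths agree. -/
/-- The periodic cycle `P_α` of `α mod 1` under the Gauss map: the set of points visited
infinitely often by the forward orbit. -/
noncomputable def gaussPeriod (α : ℝ) : Set ℝ :=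
  {y : ℝ | {n : ℕ | gaussMap^[n] (Int.fract α) = y}.Infinite}

/-!
Call two reals tail-equivalent when the Gauss orbits of their fractional parts meet. Which points
an orbit visits infinitely often only depends on the orbit from some point on, so tail-equivalent
reals have the same Gauss period. It remains to see that `x ↦ γ x` preserves the tail class of an
irrational `x` for every `γ ∈ GL₂(ℤ)`. This is clear for `x ↦ x + k` (same fractional part) and
for `x ↦ x⁻¹` (the orbit is shifted by one step); for `x ↦ -x` it follows from
`G (G (1 - y)) = G y` for the Gauss map `G` and `0 < y < 1/2`. A general `γ` is reduced to these
by running the Euclidean algorithm on its bottom row.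
-/

open Filter

theorem frequently_iterate_apply_iterate_eq {X : Type*} (f : X → X) (x y : X) (m : ℕ) :
    (∃ᶠ k in atTop, f^[k] (f^[m] x) = y) ↔ ∃ᶠ k in atTop, f^[k] x = y := by
  conv_rhs => rw [← map_add_atTop_eq_nat m, frequently_map]
  simp only [Function.iterate_add_apply]

theorem mem_gaussPeriod_iff_frequently (α y : ℝ) :
    y ∈ gaussPeriod α ↔ ∃ᶠ k in atTop, gaussMap^[k] (Int.fract α) = y :=
  Nat.frequently_atTop_iff_infinite.symm

theorem gaussMap_one_sub {y : ℝ} (h0 : 0 ≤ y) (hy : y < 1 / 2) :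
    gaussMap (1 - y) = y / (1 - y) := by
  have hpos : 0 < 1 - y := by linarith
  have hlower : 1 ≤ (1 - y)⁻¹ := one_le_inv₀ hpos |>.mpr (by linarith)
  have hupper : (1 - y)⁻¹ < 2 := (inv_lt_iff_one_lt_mul₀ hpos).mpr (by linarith)
  have hfloor : ⌊(1 - y)⁻¹⌋ = 1 :=
    Int.floor_eq_iff.mpr ⟨by simpa using hlower, by norm_num; linarith⟩
  simp only [gaussMap, Int.fract, hfloor, Int.cast_one]
  field_simp
  ring

theorem gaussMap_div_one_sub {y : ℝ} (hy : y ≠ 0) : gaussMap (y / (1 - y)) = gaussMap y := by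
  have h : (y / (1 - y))⁻¹ = y⁻¹ + ((-1 : ℤ) : ℝ) := by
    rw [inv_div]; push_cast; field_simp; ring
  simp only [gaussMap, h, Int.fract_add_intCast]

theorem gaussMap_gaussMap_one_sub {y : ℝ} (h0 : 0 < y) (hy : y < 1 / 2) :
    gaussMap (gaussMap (1 - y)) = gaussMap y := by
  rw [gaussMap_one_sub h0.le hy, gaussMap_div_one_sub h0.ne']

/-- `α` and `β` have continued fraction expansions with a common tail. -/
def GaussTailEquiv (α β : ℝ) : Prop :=
  ∃ m n : ℕ, gaussMap^[m] (Int.fract α) = gaussMap^[n] (Int.fract β)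

namespace GaussTailEquiv

@[refl]
theorem refl (α : ℝ) : GaussTailEquiv α α := ⟨0, 0, rfl⟩

@[symm]
theorem symm {α β : ℝ} : GaussTailEquiv α β → GaussTailEquiv β α
  | ⟨m, n, h⟩ => ⟨n, m, h.symm⟩

@[trans]
theorem trans {α β γ : ℝ} : GaussTailEquiv α β → GaussTailEquiv β γ → GaussTailEquiv α γ
  | ⟨m, n, h₁⟩, ⟨k, l, h₂⟩ => by
    refine ⟨k + m, n + l, ?_⟩
    rw [Function.iterate_add_apply, h₁, ← Function.iterate_add_apply, add_comm,
      Function.iterate_add_apply, h₂, ← Function.iterate_add_apply]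

instance : Trans GaussTailEquiv GaussTailEquiv GaussTailEquiv := ⟨trans⟩

theorem of_fract_eq {α β : ℝ} (h : Int.fract α = Int.fract β) : GaussTailEquiv α β :=
  ⟨0, 0, h⟩

theorem add_intCast (α : ℝ) (k : ℤ) : GaussTailEquiv (α + k) α :=
  of_fract_eq (Int.fract_add_intCast α k)

theorem neg (α : ℝ) : GaussTailEquiv (-α) α := by
  rcases (Int.fract_nonneg α).eq_or_lt with h0 | h0
  · exact of_fract_eq (by rw [Int.fract_neg_eq_zero.mpr h0.symm, ← h0])
  have hneg : Int.fract (-α) = 1 - Int.fract α := Int.fract_neg h0.ne'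
  rcases lt_trichotomy (Int.fract α) (1 / 2) with hlt | heq | hgt
  · exact ⟨2, 1, by rw [hneg]; exact gaussMap_gaussMap_one_sub h0 hlt⟩
  · exact of_fract_eq (by rw [hneg, heq]; norm_num)
  · have h := gaussMap_gaussMap_one_sub (y := 1 - Int.fract α)
      (by linarith [Int.fract_lt_one α]) (by linarith)
    rw [sub_sub_cancel] at h
    exact ⟨1, 2, by rw [hneg]; exact h.symm⟩

theorem inv_of_pos {α : ℝ} (hα : 0 < α) : GaussTailEquiv α⁻¹ α := by
  rcases lt_trichotomy α 1 with hlt | rfl | hgt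
  · have hfract : Int.fract α = α := Int.fract_eq_self.mpr ⟨hα.le, hlt⟩
    exact ⟨0, 1, by simp [hfract, gaussMap]⟩
  · rw [inv_one]
  · have hfract : Int.fract α⁻¹ = α⁻¹ :=
      Int.fract_eq_self.mpr ⟨(inv_pos.mpr hα).le, inv_lt_one_of_one_lt₀ hgt⟩
    exact ⟨1, 0, by simp [hfract, gaussMap]⟩

theorem inv (α : ℝ) : GaussTailEquiv α⁻¹ α := by
  rcases lt_trichotomy α 0 with hneg | rfl | hpos
  · calc α⁻¹ = -(-α)⁻¹ := by rw [inv_neg, neg_neg]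
      GaussTailEquiv _ (-α)⁻¹ := neg _
      GaussTailEquiv _ (-α) := inv_of_pos (neg_pos.mpr hneg)
      GaussTailEquiv _ α := neg α
  · rw [inv_zero]
  · exact inv_of_pos hpos

theorem unit_mul_add_intCast {u : ℤ} (hu : IsUnit u) (α : ℝ) (b : ℤ) :
    GaussTailEquiv (u * α + b) α := by
  refine (add_intCast _ b).trans ?_
  rcases Int.isUnit_iff.mp hu with rfl | rfl
  · simpa using refl α
  · simpa using neg α

theorem mul_add_div_of_isUnit {a d : ℤ} (ha : IsUnit a) (hd : IsUnit d) (α : ℝ) (b : ℤ) :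
    GaussTailEquiv ((a * α + b) / d) α := by
  have hdd : (d : ℝ) * d = 1 := by exact_mod_cast Int.isUnit_mul_self hd
  have hβ : (a * α + b) / d = ((a * d : ℤ) : ℝ) * α + (b * d : ℤ) := by
    rw [div_eq_iff (left_ne_zero_of_mul_eq_one hdd)]
    push_cast
    linear_combination -(a * α + b) * hdd
  rw [hβ]
  exact unit_mul_add_intCast (ha.mul hd) α (b * d)

theorem moebius {α : ℝ} (hα : Irrational α) {a b c d : ℤ} (hdet : IsUnit (a * d - b * c)) :
    GaussTailEquiv ((a * α + b) / (c * α + d)) α := by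
  by_cases hc : c = 0
  · subst hc
    rw [mul_zero, sub_zero, IsUnit.mul_iff] at hdet
    rw [Int.cast_zero, zero_mul, zero_add]
    exact mul_add_div_of_isUnit hdet.1 hdet.2 α b
  · have hden : (c : ℝ) * α + d ≠ 0 := ((hα.intCast_mul hc).add_intCast d).ne_zero
    have hdet' : IsUnit (c * (b - a / c * d) - d * (a % c)) := by
      have := Int.mul_ediv_add_emod a c
      rw [show c * (b - a / c * d) - d * (a % c) = -(a * d - b * c) by
        linear_combination (-d) * this]
      exact hdet.neg
    set δ : ℝ := ((a % c : ℤ) * α + (b - a / c * d : ℤ)) / (c * α + d)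
    have hβ : (a * α + b) / (c * α + d) = δ + (a / c : ℤ) := by
      rw [div_add' _ _ _ hden]
      congr 1
      have := congrArg (Int.cast : ℤ → ℝ) (Int.mul_ediv_add_emod a c)
      push_cast at this ⊢
      linear_combination (-α) * this
    calc (a * α + b) / (c * α + d) = δ + (a / c : ℤ) := hβ
      GaussTailEquiv _ δ := add_intCast δ _
      GaussTailEquiv _ δ⁻¹ := (inv δ).symm
      _ = (c * α + d) / ((a % c : ℤ) * α + (b - a / c * d : ℤ)) := inv_div _ _
      GaussTailEquiv _ α := moebius hα hdet'
termination_by c.natAbs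
decreasing_by
  have := Int.emod_lt a hc
  have := Int.emod_nonneg a hc
  omega

end GaussTailEquiv

theorem gaussPeriod_eq_of_gaussTailEquiv {α β : ℝ} (h : GaussTailEquiv α β) :
    gaussPeriod α = gaussPeriod β := by
  obtain ⟨m, n, hmn⟩ := h
  ext y
  rw [mem_gaussPeriod_iff_frequently, mem_gaussPeriod_iff_frequently,
    ← frequently_iterate_apply_iterate_eq _ _ _ m, hmn, frequently_iterate_apply_iterate_eq]

theorem stmt_13_general (α : ℝ) (hirr : Irrational α)
    (M : Matrix (Fin 2) (Fin 2) ℤ) (hM : M.det = 1 ∨ M.det = -1) :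
    ∀ β : ℝ, β = ((M 0 0 : ℝ) * α + (M 0 1 : ℝ)) / ((M 1 0 : ℝ) * α + (M 1 1 : ℝ)) →
      gaussPeriod β = gaussPeriod α ∧
      (gaussPeriod β).ncard = (gaussPeriod α).ncard := by
  rintro β rfl
  rw [Matrix.det_fin_two, ← Int.isUnit_iff] at hM
  have hperiod := gaussPeriod_eq_of_gaussTailEquiv (GaussTailEquiv.moebius hirr hM)
  exact ⟨hperiod, by rw [hperiod]⟩

/-- for a real quadratic irrational `α` and any `γ ∈ PGL₂(ℤ)` acting by Möbius
transformations, the Gauss-map period of `γα` equals that of `α` (as subsets of `[0,1]`), and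
in particular the period lengths agree. -/
theorem stmt_13 (α : ℝ) (hirr : Irrational α)
    (a b c : ℤ) (ha : a ≠ 0)
    (hq : (a : ℝ) * α ^ 2 + (b : ℝ) * α + (c : ℝ) = 0)
    (M : Matrix (Fin 2) (Fin 2) ℤ) (hM : M.det = 1 ∨ M.det = -1) :
    ∀ β : ℝ, β = ((M 0 0 : ℝ) * α + (M 0 1 : ℝ)) / ((M 1 0 : ℝ) * α + (M 1 1 : ℝ)) →
      gaussPeriod β = gaussPeriod α ∧
      (gaussPeriod β).ncard = (gaussPeriod α).ncard :=
  stmt_13_general α hirr M hM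
end

section
/- Let x = Γg be a point of X = Γ\G with G = PGL₂(ℝ) × ∏_{p∈S} PGL₂(ℚ_p) and Γ = PGL₂(ℤ[1/p : p ∈ S]) embedded diagonally, and let A_∞ be the real diagonal one-parameter subgroup. Suppose the orbit of a point y ∈ X under A_∞ satisfies y·a(t₀) = y·(e, h₀) for some t₀ > 0 and h₀ in the finite part (i.e., the A_∞-orbit of the real projection is a closed loop of length t₀ with holonomy h₀). Then the closure of y·A_∞ equals y·(A_∞ × H), where H is the closure of the cyclic group generated by h₀ in ∏_{p∈S} PGL₂(ℚ_p), and this orbit closure is compact. -/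
/-!
Write `H` for the closure of `⟨h₀⟩`. Since `h₀` commutes with the flow, `a(t₀)ⁿ • y = h₀ⁿ • y`,
so `y · a(t) h₀ⁿ` lies on the orbit `y · A_∞`; letting `h₀ⁿ` approach `h ∈ H` puts
`y · a(t) h` in its closure. Conversely, reducing `t` modulo `t₀` shows that `y · (A_∞ × H)` is
the image of the compact set `[0, t₀] × H`, hence compact and in particular closed, and it
contains the orbit.
-/

open Set

theorem map_zsmul_of_map_add {A G : Type*} [AddGroup A] [Group G] {a : A → G}
    (ha : ∀ s t, a (s + t) = a s * a t) (n : ℤ) (t : A) : a (n • t) = a t ^ n :=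
  map_zpow (MonoidHom.mk' (fun s : Multiplicative A => a s.toAdd) fun _ _ => ha _ _)
    (Multiplicative.ofAdd t) n

theorem Commute.zpow_smul_eq_zpow_smul {G X : Type*} [Group G] [MulAction G X] {g h : G}
    (hgh : Commute g h) {x : X} (hx : g • x = h • x) (n : ℤ) : g ^ n • x = h ^ n • x := by
  have hfix : h⁻¹ * g ∈ MulAction.stabilizer G x := by
    rw [MulAction.mem_stabilizer_iff, mul_smul, hx, inv_smul_smul]
  have := MulAction.mem_stabilizer_iff.mp (zpow_mem hfix n)
  rwa [(hgh.symm.inv_left).mul_zpow, inv_zpow, mul_smul, inv_smul_eq_iff] at this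

theorem mul_smul_eq_mul_smul_of_mem_closure {G X : Type*} [Group G] [TopologicalSpace G]
    [ContinuousMul G] [TopologicalSpace X] [T2Space X] [MulAction G X] [ContinuousSMul G X]
    {s : Set G} {c : G} (hs : ∀ h ∈ s, Commute h c) (x : X) {g : G} (hg : g ∈ closure s) :
    (c * g) • x = (g * c) • x := by
  have hEq : EqOn (fun g : G => (c * g) • x) (fun g => (g * c) • x) s :=
    fun h hh => congrArg (· • x) (hs h hh).eq.symm
  exact hEq.closure (by fun_prop) (by fun_prop) hg

theorem flow_int_mul_smul_eq {G X : Type*} [Group G] [MulAction G X] {a : ℝ → G}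
    (ha : ∀ s t, a (s + t) = a s * a t) {h₀ : G} {t₀ : ℝ} (hcomm : Commute h₀ (a t₀)) {y : X}
    (hret : a t₀ • y = h₀ • y) (n : ℤ) : a (n * t₀) • y = h₀ ^ n • y := by
  rw [← zsmul_eq_mul, map_zsmul_of_map_add ha]
  exact hcomm.symm.zpow_smul_eq_zpow_smul hret n

theorem flow_mul_smul_mem_closure_orbit {G X : Type*} [Group G] [TopologicalSpace G]
    [ContinuousMul G] [TopologicalSpace X] [MulAction G X] [ContinuousSMul G X] {a : ℝ → G}
    (ha : ∀ s t, a (s + t) = a s * a t) {h₀ : G} {t₀ : ℝ} (hcomm : Commute h₀ (a t₀)) {y : X}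
    (hret : a t₀ • y = h₀ • y) (t : ℝ) {h : G}
    (hh : h ∈ closure (Subgroup.zpowers h₀ : Set G)) :
    (a t * h) • y ∈ closure {x : X | ∃ t : ℝ, x = a t • y} := by
  refine map_mem_closure (f := fun g : G => (a t * g) • y) (by fun_prop) hh ?_
  rintro _ ⟨n, rfl⟩
  exact ⟨t + n * t₀, by
    rw [ha, mul_smul, flow_int_mul_smul_eq ha hcomm hret, ← mul_smul]⟩

theorem setOf_flow_mul_smul_eq_image {G X : Type*} [Group G] [TopologicalSpace G]
    [IsTopologicalGroup G] [TopologicalSpace X] [T2Space X] [MulAction G X]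
    [ContinuousSMul G X] {a : ℝ → G} (ha : ∀ s t, a (s + t) = a s * a t) {h₀ : G}
    (hcomm : ∀ t, Commute h₀ (a t)) {y : X} {t₀ : ℝ} (ht₀ : 0 < t₀)
    (hret : a t₀ • y = h₀ • y) :
    {x : X | ∃ t : ℝ, ∃ h ∈ (Subgroup.zpowers h₀).topologicalClosure, x = (a t * h) • y}
      = (fun p : ℝ × G => (a p.1 * p.2) • y) ''
          (Icc 0 t₀ ×ˢ ((Subgroup.zpowers h₀).topologicalClosure : Set G)) := by
  ext x
  constructor
  · rintro ⟨t, h, hh, rfl⟩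
    set n := toIcoDiv ht₀ 0 t
    set s := toIcoMod ht₀ 0 t
    have hn : h₀ ^ n ∈ (Subgroup.zpowers h₀).topologicalClosure :=
      Subgroup.le_topologicalClosure _ (zpow_mem (Subgroup.mem_zpowers h₀) n)
    have hh_comm : (a (n • t₀) * h) • y = (h * a (n • t₀)) • y := by
      refine mul_smul_eq_mul_smul_of_mem_closure ?_ y hh
      rintro _ ⟨m, rfl⟩
      exact (hcomm _).zpow_left m
    refine ⟨(s, h * h₀ ^ n), ⟨Ico_subset_Icc_self (toIcoMod_mem_Ico' ht₀ t),
      mul_mem hh hn⟩, ?_⟩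
    calc (a s * (h * h₀ ^ n)) • y = a s • h • a (n * t₀) • y := by
          rw [flow_int_mul_smul_eq ha (hcomm t₀) hret, mul_smul, mul_smul]
      _ = (a (s + n • t₀) * h) • y := by
          rw [ha, ← zsmul_eq_mul, mul_assoc, mul_smul _ _ y, hh_comm, mul_smul]
      _ = (a t * h) • y := by rw [toIcoMod_add_toIcoDiv_zsmul]
  · rintro ⟨⟨s, h⟩, ⟨-, hh⟩, rfl⟩
    exact ⟨s, h, hh, rfl⟩

/-- Let a topological group `G` act continuously on a Hausdorff space `X`
(abstracting `X = Γ\(PGL₂(ℝ) × ∏_{p∈S} PGL₂(ℚ_p))`), let `a : ℝ → G` be a continuous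
one-parameter subgroup (the real diagonal flow `A_∞`), and let `h₀ ∈ G` commute with the
flow (the finite-part holonomy).  If `y` satisfies `y·a(t₀) = y·h₀` for some `t₀ > 0`, and
the closure `H` of the cyclic group generated by `h₀` is compact, then the closure of the
`A_∞`-orbit of `y` equals `y·(A_∞ × H) = {y·(a(t)h) : t ∈ ℝ, h ∈ H}`, and this orbit
closure is compact. -/
theorem stmt_14 {G X : Type*} [Group G] [TopologicalSpace G] [IsTopologicalGroup G]
    [TopologicalSpace X] [T2Space X] [MulAction G X] [ContinuousSMul G X]
    (a : ℝ → G) (ha : ∀ s t : ℝ, a (s + t) = a s * a t) (hacont : Continuous a)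
    (h₀ : G) (hcomm : ∀ t : ℝ, Commute h₀ (a t))
    (y : X) (t₀ : ℝ) (ht₀ : 0 < t₀)
    (hret : a t₀ • y = h₀ • y)
    (hH : IsCompact (((Subgroup.zpowers h₀).topologicalClosure : Subgroup G) : Set G)) :
    closure {x : X | ∃ t : ℝ, x = a t • y}
      = {x : X | ∃ t : ℝ, ∃ h ∈ (Subgroup.zpowers h₀).topologicalClosure, x = (a t * h) • y}
    ∧ IsCompact
        {x : X | ∃ t : ℝ, ∃ h ∈ (Subgroup.zpowers h₀).topologicalClosure, x = (a t * h) • y} := by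
  have hcompact : IsCompact
      {x : X | ∃ t : ℝ, ∃ h ∈ (Subgroup.zpowers h₀).topologicalClosure, x = (a t * h) • y} := by
    rw [setOf_flow_mul_smul_eq_image ha hcomm ht₀ hret]
    exact (isCompact_Icc.prod hH).image (by fun_prop)
  refine ⟨subset_antisymm (closure_minimal ?_ hcompact.isClosed) ?_, hcompact⟩
  · rintro _ ⟨t, rfl⟩
    exact ⟨t, 1, one_mem _, by rw [mul_one]⟩
  · rintro _ ⟨t, h, hh, rfl⟩
    exact flow_mul_smul_mem_closure_orbit ha (hcomm t₀) hret t hh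
end
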